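/- Let N ≥ 1, let Ω ⊆ ℝ^N be a nonempty open set, let μ > 0 and 2 < q < 2 + 4/N. If the ground-state energy at unit mass is negative, i.e. E_1 < 0, then the map t ↦ E_t is strictly subadditive at mass one: for every t ∈ (0, 1) one has E_1 < E_t + E_{1−t}. -/

import Mathlib

open MeasureTheory

/-!
Scaling a competitor `u` of mass `s < 1` to `s^(-1/2) u` gives a competitor of mass one whose
kinetic part is multiplied by `s⁻¹` and whose (nonnegative) potential part by the strictly larger
factor `s^(-q/2)`. Passing to infima, `s E_1 ≤ E_s + (s^(1-q/2) - 1) min(E_s, 0)`, so `s E_1 < E_s`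
for every `s ∈ (0, 1)` as soon as `E_1 < 0`; adding this for `t` and `1 - t` gives the claim.
-/

/-- The set of NLS energies `E(u) = ½∫_Ω|∇u|² − (μ/q)∫_Ω|u|^q` over
`u ∈ C_c^∞(Ω, ℂ)` with mass `∫_Ω|u|² = t`. -/
def nlsEnergies (N : ℕ) (Ω : Set (EuclideanSpace ℝ (Fin N))) (μ q t : ℝ) : Set ℝ :=
  {r : ℝ | ∃ u : EuclideanSpace ℝ (Fin N) → ℂ,
    ContDiff ℝ (⊤ : ℕ∞) u ∧ HasCompactSupport u ∧ tsupport u ⊆ Ω ∧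
    (∫ x in Ω, ‖u x‖ ^ 2) = t ∧
    (1 / 2) * (∫ x in Ω, ‖fderiv ℝ u x‖ ^ 2) - (μ / q) * (∫ x in Ω, ‖u x‖ ^ q) = r}

namespace NLS

variable {N : ℕ} {Ω : Set (EuclideanSpace ℝ (Fin N))} {μ q s r : ℝ}

lemma exists_scaled_mem_nlsEnergies (hr : r ∈ nlsEnergies N Ω μ q s) {θ : ℝ} (hθ : 0 ≤ θ) :
    ∃ K P : ℝ, 0 ≤ K ∧ 0 ≤ P ∧ r = K - (μ / q) * P ∧
      θ * K - θ ^ (q / 2) * ((μ / q) * P) ∈ nlsEnergies N Ω μ q (θ * s) := by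
  obtain ⟨u, hu, hcpt, hsupp, hmass, rfl⟩ := hr
  obtain ⟨c, hc, hc2, hcq⟩ : ∃ c : ℝ, 0 ≤ c ∧ c ^ 2 = θ ∧ c ^ q = θ ^ (q / 2) :=
    ⟨√θ, Real.sqrt_nonneg θ, Real.sq_sqrt hθ, by
      rw [Real.sqrt_eq_rpow, ← Real.rpow_mul hθ]; ring_nf⟩
  have hnorm : ∀ x, ‖c • u x‖ = c * ‖u x‖ := fun x => by
    rw [norm_smul, Real.norm_of_nonneg hc]
  have hderiv : ∀ x, ‖fderiv ℝ (fun y => c • u y) x‖ = c * ‖fderiv ℝ u x‖ := fun x => by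
    have : fderiv ℝ (fun y => c • u y) x = c • fderiv ℝ u x :=
      fderiv_const_smul (hu.differentiable (by simp)).differentiableAt c
    rw [this, norm_smul, Real.norm_of_nonneg hc]
  refine ⟨(1 / 2) * ∫ x in Ω, ‖fderiv ℝ u x‖ ^ 2, ∫ x in Ω, ‖u x‖ ^ q,
    mul_nonneg (by norm_num) (integral_nonneg fun x => by positivity),
    integral_nonneg fun x => by positivity, rfl,
    fun x => c • u x, hu.const_smul c, hcpt.smul_left (f := fun _ => c), ?_, ?_, ?_⟩
  · exact (tsupport_smul_subset_right (fun _ => c) u).trans hsupp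
  · simp_rw [hnorm, mul_pow, integral_const_mul, hmass, hc2]
  · simp_rw [hderiv, hnorm, mul_pow, Real.mul_rpow hc (norm_nonneg _), integral_const_mul,
      hc2, hcq]
    ring

lemma exists_mem_nlsEnergies_mul_le (hμ : 0 ≤ μ) (hq : 2 ≤ q)
    (hr : r ∈ nlsEnergies N Ω μ q s) {θ : ℝ} (hθ : 1 ≤ θ) :
    ∃ r' ∈ nlsEnergies N Ω μ q (θ * s), r' ≤ θ * r + (θ ^ (q / 2) - θ) * min r 0 := by
  obtain ⟨K, P, hK, hP, rfl, hmem⟩ := exists_scaled_mem_nlsEnergies hr (zero_le_one.trans hθ)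
  refine ⟨_, hmem, ?_⟩
  have hV : 0 ≤ (μ / q) * P := by positivity
  have hθq : θ ≤ θ ^ (q / 2) := Real.self_le_rpow_of_one_le hθ (by linarith)
  have hmin : -((μ / q) * P) ≤ min (K - (μ / q) * P) 0 :=
    le_min (by linarith) (by linarith)
  nlinarith [mul_le_mul_of_nonneg_left hmin (sub_nonneg.2 hθq)]

lemma mul_sInf_nlsEnergies_one_le (hμ : 0 ≤ μ) (hq : 2 ≤ q) (hs0 : 0 < s) (hs1 : s ≤ 1)
    (hbdd : BddBelow (nlsEnergies N Ω μ q 1)) (hr : r ∈ nlsEnergies N Ω μ q s) :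
    s * sInf (nlsEnergies N Ω μ q 1) ≤ r + (s⁻¹ ^ (q / 2 - 1) - 1) * min r 0 := by
  obtain ⟨r', hr', hle⟩ :=
    exists_mem_nlsEnergies_mul_le hμ hq hr (one_le_inv₀ hs0 |>.2 hs1)
  rw [inv_mul_cancel₀ hs0.ne'] at hr'
  calc s * sInf (nlsEnergies N Ω μ q 1)
      ≤ s * (s⁻¹ * r + (s⁻¹ ^ (q / 2) - s⁻¹) * min r 0) := by
        gcongr
        exact (csInf_le hbdd hr').trans hle
    _ = r + (s⁻¹ ^ (q / 2 - 1) - 1) * min r 0 := by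
        rw [Real.rpow_sub_one (inv_ne_zero hs0.ne')]
        field_simp

lemma mul_sInf_nlsEnergies_one_le_sInf (hμ : 0 ≤ μ) (hq : 2 ≤ q) (hs0 : 0 < s) (hs1 : s ≤ 1)
    (hbdd : BddBelow (nlsEnergies N Ω μ q 1)) (hnonpos : sInf (nlsEnergies N Ω μ q 1) ≤ 0) :
    s * sInf (nlsEnergies N Ω μ q 1) ≤
      sInf (nlsEnergies N Ω μ q s) +
        (s⁻¹ ^ (q / 2 - 1) - 1) * min (sInf (nlsEnergies N Ω μ q s)) 0 := by
  set κ := s⁻¹ ^ (q / 2 - 1) - 1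
  have hκ : 0 ≤ κ :=
    sub_nonneg.2 (Real.one_le_rpow (one_le_inv₀ hs0 |>.2 hs1) (by linarith))
  rcases (nlsEnergies N Ω μ q s).eq_empty_or_nonempty with hempty | hne
  · -- `sInf ∅ = 0`
    simp [hempty, mul_nonpos_of_nonneg_of_nonpos hs0.le hnonpos]
  have hmono : Monotone fun x : ℝ => x + κ * min x 0 :=
    monotone_id.add (monotone_id.min monotone_const |>.const_mul hκ)
  have hlower :
      ∀ r ∈ nlsEnergies N Ω μ q s, s * sInf (nlsEnergies N Ω μ q 1) ≤ r + κ * min r 0 :=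
    fun r hr => mul_sInf_nlsEnergies_one_le hμ hq hs0 hs1 hbdd hr
  have hbdds : BddBelow (nlsEnergies N Ω μ q s) :=
    ⟨_, fun r hr => (hlower r hr).trans (by nlinarith [min_le_right r 0])⟩
  rw [hmono.map_csInf_of_continuousAt (by fun_prop) hne hbdds]
  exact le_csInf (hne.image _) (Set.forall_mem_image.2 hlower)

lemma mul_sInf_nlsEnergies_one_lt_sInf (hμ : 0 ≤ μ) (hq : 2 < q) (hs0 : 0 < s) (hs1 : s < 1)
    (hneg : sInf (nlsEnergies N Ω μ q 1) < 0) :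
    s * sInf (nlsEnergies N Ω μ q 1) < sInf (nlsEnergies N Ω μ q s) := by
  have hbdd : BddBelow (nlsEnergies N Ω μ q 1) := by
    by_contra h
    rw [Real.sInf_of_not_bddBelow h] at hneg
    exact hneg.false
  have hle := mul_sInf_nlsEnergies_one_le_sInf hμ hq.le hs0 hs1.le hbdd hneg.le
  rcases lt_or_ge (sInf (nlsEnergies N Ω μ q s)) 0 with hEs | hEs
  · have hκ : 0 < s⁻¹ ^ (q / 2 - 1) - 1 :=
      sub_pos.2 (Real.one_lt_rpow (one_lt_inv₀ hs0 |>.2 hs1) (by linarith))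
    rw [min_eq_left hEs.le] at hle
    nlinarith
  · nlinarith

end NLS

open NLS in
theorem statement17_general (N : ℕ)
    (Ω : Set (EuclideanSpace ℝ (Fin N)))
    (μ q : ℝ) (hμ : 0 < μ) (hq : 2 < q)
    (hneg : sInf (nlsEnergies N Ω μ q 1) < 0) :
    ∀ t ∈ Set.Ioo (0 : ℝ) 1,
      sInf (nlsEnergies N Ω μ q 1) <
        sInf (nlsEnergies N Ω μ q t) + sInf (nlsEnergies N Ω μ q (1 - t)) := by
  rintro t ⟨ht0, ht1⟩
  have ht := mul_sInf_nlsEnergies_one_lt_sInf hμ.le hq ht0 ht1 hneg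
  have h1t := mul_sInf_nlsEnergies_one_lt_sInf hμ.le hq (sub_pos.2 ht1) (by linarith) hneg
  linarith

/-- strict subadditivity at mass one for the subcritical NLS energy
with negative ground-state energy, from Example 2.7 of the paper.  For a nonempty open
`Ω ⊆ ℝᴺ`, `μ > 0`, `2 < q < 2 + 4/N`: if `E_1 < 0` then `E_1 < E_t + E_{1−t}` for all
`t ∈ (0, 1)`. -/
theorem statement17 (N : ℕ) (hN : 1 ≤ N)
    (Ω : Set (EuclideanSpace ℝ (Fin N))) (hΩ : IsOpen Ω) (hne : Ω.Nonempty)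
    (μ q : ℝ) (hμ : 0 < μ) (hq : 2 < q) (hq' : q < 2 + 4 / N)
    (hneg : sInf (nlsEnergies N Ω μ q 1) < 0) :
    ∀ t ∈ Set.Ioo (0 : ℝ) 1,
      sInf (nlsEnergies N Ω μ q 1) <
        sInf (nlsEnergies N Ω μ q t) + sInf (nlsEnergies N Ω μ q (1 - t)) :=
  statement17_general N Ω μ q hμ hq hneg
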